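/- arXiv:quant-ph/0507167 — 8 statements merged into one kernel-verified Lean document; each statement's English description precedes it below -/
import Mathlib

section
/- Let t, φ ∈ ℝ and let v = (cos t) • e₀ + (exp(iφ) sin t) • e₁ ∈ ℂ². With β₀ = (1/2) · sin(2t) · exp(iφ), one has ‖c v − β₀ • v‖ = sin² t, where c is the fermion annihilation operator. -/
/-!
Since `c v = e^{iφ} sin t • e₀` and `β₀ = sin t cos t e^{iφ}`, the residual is
`e^{iφ} sin³ t • e₀ - e^{2iφ} sin² t cos t • e₁`, whose squared norm is
`sin⁶ t + sin⁴ t cos² t = sin⁴ t`.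
-/

open EuclideanSpace in
theorem norm_smul_single_zero_add_smul_single_one {𝕜 : Type*} [RCLike 𝕜] (a b : 𝕜) :
    ‖a • single (0 : Fin 2) (1 : 𝕜) + b • single 1 1‖ = √(‖a‖ ^ 2 + ‖b‖ ^ 2) := by
  simp [EuclideanSpace.norm_eq, Fin.sum_univ_two]

open EuclideanSpace in
theorem apply_smul_single_zero_add_smul_single_one {𝕜 : Type*} [RCLike 𝕜]
    {c : EuclideanSpace 𝕜 (Fin 2) →ₗ[𝕜] EuclideanSpace 𝕜 (Fin 2)}
    (hc0 : c (single 0 1) = 0) (hc1 : c (single 1 1) = single 0 1) (a b : 𝕜) :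
    c (a • single 0 1 + b • single 1 1) = b • single 0 1 := by
  simp [hc0, hc1]

/-- For the "approximate complex fermion coherent state"
`v = cos t • e₀ + e^{iφ} sin t • e₁` and `β₀ = ½ sin(2t) e^{iφ}`,
one has `‖c v − β₀ • v‖ = sin² t`. -/
theorem norm_residual_approx_fermion_coherent_state
    (c : EuclideanSpace ℂ (Fin 2) →ₗ[ℂ] EuclideanSpace ℂ (Fin 2))
    (hc0 : c (EuclideanSpace.single 0 1) = 0)
    (hc1 : c (EuclideanSpace.single 1 1) = EuclideanSpace.single 0 1)
    (t φ : ℝ) (v : EuclideanSpace ℂ (Fin 2))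
    (hv : v = (Real.cos t : ℂ) • EuclideanSpace.single 0 1
        + (Complex.exp (φ * Complex.I) * Real.sin t) • EuclideanSpace.single 1 1)
    (β₀ : ℂ)
    (hβ₀ : β₀ = (1 / 2 : ℂ) * Real.sin (2 * t) * Complex.exp (φ * Complex.I)) :
    ‖c v - β₀ • v‖ = Real.sin t ^ 2 := by
  have he := Complex.norm_exp_ofReal_mul_I φ
  have hpyth := Real.sin_sq_add_cos_sq t
  rw [Real.sin_two_mul] at hβ₀
  generalize Complex.exp (φ * Complex.I) = e at he hv hβ₀
  generalize Real.sin t = s at hpyth hv hβ₀ ⊢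
  generalize Real.cos t = co at hpyth hv hβ₀
  have hresidual : c v - β₀ • v = (e * (s ^ 3 : ℝ)) • EuclideanSpace.single 0 1
      + (-(e ^ 2 * (s ^ 2 * co : ℝ))) • EuclideanSpace.single 1 1 := by
    have hpythℂ : (s : ℂ) ^ 2 + (co : ℂ) ^ 2 = 1 := by exact_mod_cast hpyth
    rw [hv, hβ₀, apply_smul_single_zero_add_smul_single_one hc0 hc1]
    push_cast
    match_scalars
    · linear_combination (-e * s) * hpythℂ
    · ring
  rw [hresidual, norm_smul_single_zero_add_smul_single_one, norm_neg, norm_mul, norm_mul,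
    norm_pow, he, Complex.norm_real, Complex.norm_real, Real.norm_eq_abs, Real.norm_eq_abs,
    Real.sqrt_eq_iff_eq_sq (by positivity) (by positivity)]
  simp only [one_mul, one_pow, sq_abs]
  linear_combination s ^ 4 * hpyth
end

section
/- Let t, φ ∈ ℝ and let v = (cos t) • e₀ + (exp(iφ) sin t) • e₁ ∈ ℂ². Then for every β ∈ ℂ, sin² t ≤ ‖c v − β • v‖, where c is the fermion annihilation operator. Consequently β₀ = (1/2) sin(2t) exp(iφ) realizes the minimum of β ↦ ‖c v − β • v‖ and the minimum value is sin² t. -/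
/-- For `v = cos t • e₀ + e^{iφ} sin t • e₁`, every `β ∈ ℂ` satisfies
`sin² t ≤ ‖c v − β • v‖`, and `β₀ = ½ sin(2t) e^{iφ}` realizes this minimum. -/
theorem min_residual_approx_fermion_coherent_state
    (c : EuclideanSpace ℂ (Fin 2) →ₗ[ℂ] EuclideanSpace ℂ (Fin 2))
    (hc0 : c (EuclideanSpace.single 0 1) = 0)
    (hc1 : c (EuclideanSpace.single 1 1) = EuclideanSpace.single 0 1)
    (t φ : ℝ) (v : EuclideanSpace ℂ (Fin 2))
    (hv : v = (Real.cos t : ℂ) • EuclideanSpace.single 0 1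
        + (Complex.exp (φ * Complex.I) * Real.sin t) • EuclideanSpace.single 1 1)
    (β₀ : ℂ)
    (hβ₀ : β₀ = (1 / 2 : ℂ) * Real.sin (2 * t) * Complex.exp (φ * Complex.I)) :
    (∀ β : ℂ, Real.sin t ^ 2 ≤ ‖c v - β • v‖)
      ∧ ‖c v - β₀ • v‖ = Real.sin t ^ 2 := by
  have hcv : c v = (Complex.exp (φ * Complex.I) * Real.sin t) • EuclideanSpace.single 0 1 := by
    rw [hv, map_add, map_smul, map_smul, hc0, hc1]; simp
  set E := Complex.exp (φ * Complex.I) with hE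
  have hE1 : Complex.normSq E = 1 := by
    have := Complex.norm_exp_ofReal_mul_I φ
    rw [← Complex.sq_norm]; simp only [hE] at *; rw [this]; norm_num
  have key : ∀ β : ℂ, ‖c v - β • v‖
      = Real.sqrt (Complex.normSq (E * Real.sin t - β * Real.cos t)
        + Complex.normSq (β * (E * Real.sin t))) := by
    intro β
    rw [hcv, hv, EuclideanSpace.norm_eq]
    congr 1
    simp [Fin.sum_univ_two, EuclideanSpace.single_apply, ← Complex.sq_norm, Complex.sq_norm,
      smul_eq_mul]
  have habs : E.re ^ 2 + E.im ^ 2 = 1 := by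
    simpa [Complex.normSq_apply, sq] using hE1
  have hpyth : Real.sin t ^ 2 + Real.cos t ^ 2 = 1 := Real.sin_sq_add_cos_sq t
  constructor
  · intro β
    rw [key β]
    have hAB : (E.re * β.re + E.im * β.im) ^ 2 + (E.im * β.re - E.re * β.im) ^ 2
        = β.re ^ 2 + β.im ^ 2 := by linear_combination (β.re ^ 2 + β.im ^ 2) * habs
    have hs2 : Real.sin t ^ 2 * (Real.sin t ^ 2 + Real.cos t ^ 2) = Real.sin t ^ 2 := by
      rw [hpyth]; ring
    have hsum : Complex.normSq (E * Real.sin t - β * Real.cos t)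
        + Complex.normSq (β * (E * Real.sin t))
        = Real.sin t ^ 2 - 2 * Real.sin t * Real.cos t * (E.re * β.re + E.im * β.im)
          + (β.re ^ 2 + β.im ^ 2) := by
      simp only [Complex.normSq_apply, Complex.sub_re, Complex.sub_im, Complex.mul_re,
        Complex.mul_im, Complex.ofReal_re, Complex.ofReal_im]
      linear_combination (Real.sin t ^ 2 * (1 + β.re ^ 2 + β.im ^ 2)) * habs
        + (β.re ^ 2 + β.im ^ 2) * hpyth
    have h4 : Real.sin t ^ 4 ≤ Complex.normSq (E * Real.sin t - β * Real.cos t)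
        + Complex.normSq (β * (E * Real.sin t)) := by
      rw [hsum]
      nlinarith [sq_nonneg (E.re * β.re + E.im * β.im - Real.sin t * Real.cos t),
        sq_nonneg (E.im * β.re - E.re * β.im), hAB, hs2]
    calc Real.sin t ^ 2 = Real.sqrt ((Real.sin t ^ 2) ^ 2) :=
          (Real.sqrt_sq (sq_nonneg _)).symm
      _ ≤ _ := Real.sqrt_le_sqrt (by nlinarith)
  · rw [key β₀, hβ₀, Real.sin_two_mul]
    have ha : (1 / 2 : ℂ) * ↑(2 * Real.sin t * Real.cos t) * E * Real.cos t
        = E * ((Real.sin t * Real.cos t ^ 2 : ℝ) : ℂ) := by push_cast; ring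
    have hb : (1 / 2 : ℂ) * ↑(2 * Real.sin t * Real.cos t) * E * (E * Real.sin t)
        = E * E * ((Real.sin t ^ 2 * Real.cos t : ℝ) : ℂ) := by push_cast; ring
    have h1 : E * ↑(Real.sin t) - (1 / 2 : ℂ) * ↑(2 * Real.sin t * Real.cos t) * E * Real.cos t
        = E * ((Real.sin t - Real.sin t * Real.cos t ^ 2 : ℝ) : ℂ) := by push_cast; ring
    rw [h1, hb, Complex.normSq_mul, Complex.normSq_mul, Complex.normSq_mul, hE1,
      Complex.normSq_ofReal, Complex.normSq_ofReal]
    have : (1 : ℝ) * ((Real.sin t - Real.sin t * Real.cos t ^ 2) *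
          (Real.sin t - Real.sin t * Real.cos t ^ 2))
        + 1 * 1 * (Real.sin t ^ 2 * Real.cos t * (Real.sin t ^ 2 * Real.cos t))
        = (Real.sin t ^ 2) ^ 2 := by
      linear_combination (Real.sin t ^ 2 * (Real.cos t ^ 2 - 1)) * hpyth
    rw [this, Real.sqrt_sq (sq_nonneg _)]
end

section
/- (Proposition 1 of the paper.) Let 0 < ε < 1 and let t, φ ∈ ℝ satisfy sin² t ≤ ε. Then the normalized state v = (cos t) • e₀ + (exp(iφ) sin t) • e₁ ∈ ℂ² is an ε-complex fermion coherent state: there exists β ∈ ℂ such that ‖c v − β • v‖ ≤ ε, where c is the fermion annihilation operator. -/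
/-- Proposition 1: for `0 < ε < 1` and `sin² t ≤ ε`, the state
`v = cos t • e₀ + e^{iφ} sin t • e₁` is an ε-complex fermion coherent state:
there is `β ∈ ℂ` with `‖c v − β • v‖ ≤ ε`. -/
theorem epsilon_complex_fermion_coherent_state
    (c : EuclideanSpace ℂ (Fin 2) →ₗ[ℂ] EuclideanSpace ℂ (Fin 2))
    (hc0 : c (EuclideanSpace.single 0 1) = 0)
    (hc1 : c (EuclideanSpace.single 1 1) = EuclideanSpace.single 0 1)
    (ε : ℝ) (hε0 : 0 < ε) (hε1 : ε < 1)
    (t φ : ℝ) (ht : Real.sin t ^ 2 ≤ ε)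
    (v : EuclideanSpace ℂ (Fin 2))
    (hv : v = (Real.cos t : ℂ) • EuclideanSpace.single 0 1
        + (Complex.exp (φ * Complex.I) * Real.sin t) • EuclideanSpace.single 1 1) :
    ∃ β : ℂ, ‖c v - β • v‖ ≤ ε := by
  set E := Complex.exp (φ * Complex.I) with hE
  have hEnorm : ‖E‖ = 1 := by
    rw [hE]; simpa using Complex.abs_exp_ofReal_mul_I φ
  set s : ℂ := (Real.sin t : ℂ) with hs
  set co : ℂ := (Real.cos t : ℂ) with hco
  have hsc : s ^ 2 + co ^ 2 = 1 := by
    rw [hs, hco]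
    norm_cast
    exact Real.sin_sq_add_cos_sq t
  refine ⟨E * s * co, ?_⟩
  set a : ℂ := E * s - E * s * co * co with ha
  set b : ℂ := -(E * s * co * (E * s)) with hb
  have hx : c v - (E * s * co) • v
      = a • EuclideanSpace.single 0 1 + b • EuclideanSpace.single 1 1 := by
    rw [hv, map_add, map_smul, map_smul, hc0, hc1, smul_zero, zero_add, ha, hb]
    module
  rw [hx]
  have ha' : a = E * s ^ 3 := by
    rw [ha]; linear_combination (-(E * s)) * hsc
  have hna : ‖a‖ = |Real.sin t| ^ 3 := by
    rw [ha', norm_mul, hEnorm, one_mul, norm_pow, hs, Complex.norm_real,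
      Real.norm_eq_abs]
  have hnb : ‖b‖ = Real.sin t ^ 2 * |Real.cos t| := by
    rw [hb, norm_neg]
    have : E * s * co * (E * s) = (E * E) * (s * s * co) := by ring
    rw [this, norm_mul, norm_mul, hEnorm, one_mul, one_mul, norm_mul, norm_mul,
      hs, hco, Complex.norm_real, Complex.norm_real, Real.norm_eq_abs, Real.norm_eq_abs]
    rw [← abs_mul, ← sq, abs_of_nonneg (sq_nonneg _)]
  have hval : ‖a‖ ^ 2 + ‖b‖ ^ 2 = (Real.sin t ^ 2) ^ 2 := by
    rw [hna, hnb]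
    have h1 : (|Real.sin t| ^ 3) ^ 2 = (Real.sin t ^ 2) ^ 3 := by
      rw [← abs_pow, sq_abs]; ring
    have h2 : (Real.sin t ^ 2 * |Real.cos t|) ^ 2 = Real.sin t ^ 4 * Real.cos t ^ 2 := by
      rw [mul_pow, sq_abs]; ring
    rw [h1, h2]
    nlinarith [Real.sin_sq_add_cos_sq t]
  have hfin : ‖a • (EuclideanSpace.single 0 1 : EuclideanSpace ℂ (Fin 2))
      + b • EuclideanSpace.single 1 1‖ = Real.sqrt (‖a‖ ^ 2 + ‖b‖ ^ 2) := by
    rw [EuclideanSpace.norm_eq]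
    congr 1
    rw [Fin.sum_univ_two]
    simp [EuclideanSpace.single_apply]
  rw [hfin, hval, Real.sqrt_sq (sq_nonneg _)]
  exact ht
end

section
/- Let v ∈ ℂ² be a unit vector with components (v₀, v₁), let 0 ≤ ε, and suppose there exists β ∈ ℂ with ‖c v − β • v‖ ≤ ε, where c is the fermion annihilation operator. Then |v₁|² ≤ ε, i.e., ε bounds the occupation probability of the one-fermion state. -/
/-!
Since `c v = v₁ e₀`, the residual `c v - β v` is at least the distance from `c v` to the line
`ℂ v`, whose square is `‖c v‖² - |⟪v, c v⟫|² = |v₁|² - |v₀|² |v₁|² = |v₁|⁴` for a unit vector `v`.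
-/

open scoped InnerProductSpace

theorem sq_norm_sub_sq_norm_inner_le_sq_norm_sub_smul {𝕜 E : Type*} [RCLike 𝕜]
    [NormedAddCommGroup E] [InnerProductSpace 𝕜 E] {v : E} (hv : ‖v‖ = 1) (w : E) (β : 𝕜) :
    ‖w‖ ^ 2 - ‖⟪v, w⟫_𝕜‖ ^ 2 ≤ ‖w - β • v‖ ^ 2 := by
  set a := ⟪v, w⟫_𝕜
  -- `w - a • v` is orthogonal to `v`; Pythagoras against `a • v` and against `(a - β) • v`.
  have horth (b : 𝕜) : ⟪w - a • v, b • v⟫_𝕜 = 0 := by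
    rw [inner_smul_right, inner_sub_left, inner_smul_left, inner_self_eq_norm_sq_to_K, hv]
    simp [a]
  have hw := norm_add_sq_eq_norm_sq_add_norm_sq_of_inner_eq_zero _ _ (horth a)
  have hwβ := norm_add_sq_eq_norm_sq_add_norm_sq_of_inner_eq_zero _ _ (horth (a - β))
  rw [sub_add_cancel, norm_smul, hv, mul_one] at hw
  rw [sub_smul, sub_add_sub_cancel, ← sub_smul, norm_smul, hv, mul_one] at hwβ
  nlinarith [mul_self_nonneg ‖a - β‖]

theorem EuclideanSpace.norm_sq_fin_two {𝕜 : Type*} [RCLike 𝕜] (v : EuclideanSpace 𝕜 (Fin 2)) :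
    ‖v‖ ^ 2 = ‖v 0‖ ^ 2 + ‖v 1‖ ^ 2 := by
  rw [EuclideanSpace.norm_sq_eq, Fin.sum_univ_two]

section Annihilation

variable {c : EuclideanSpace ℂ (Fin 2) →ₗ[ℂ] EuclideanSpace ℂ (Fin 2)}

theorem annihilation_apply (hc0 : c (EuclideanSpace.single 0 1) = 0)
    (hc1 : c (EuclideanSpace.single 1 1) = EuclideanSpace.single 0 1)
    (v : EuclideanSpace ℂ (Fin 2)) : c v = v 1 • EuclideanSpace.single 0 1 := by
  have hv : v = v 0 • EuclideanSpace.single 0 1 + v 1 • EuclideanSpace.single 1 1 := by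
    ext i
    fin_cases i <;> simp
  conv_lhs => rw [hv]
  simp [hc0, hc1]

theorem sq_norm_apply_one_le_norm_sub_smul (hc0 : c (EuclideanSpace.single 0 1) = 0)
    (hc1 : c (EuclideanSpace.single 1 1) = EuclideanSpace.single 0 1)
    {v : EuclideanSpace ℂ (Fin 2)} (hv : ‖v‖ = 1) (β : ℂ) :
    ‖v 1‖ ^ 2 ≤ ‖c v - β • v‖ := by
  have hcv := annihilation_apply hc0 hc1 v
  have hnorm_cv : ‖c v‖ = ‖v 1‖ := by simp [hcv, norm_smul]
  have hinner : ‖⟪v, c v⟫_ℂ‖ = ‖v 0‖ * ‖v 1‖ := by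
    simp [hcv, EuclideanSpace.inner_single_right, mul_comm]
  have hnorm : ‖v 0‖ ^ 2 + ‖v 1‖ ^ 2 = 1 := by
    rw [← EuclideanSpace.norm_sq_fin_two, hv, one_pow]
  have key := sq_norm_sub_sq_norm_inner_le_sq_norm_sub_smul hv (c v) β
  rw [hnorm_cv, hinner] at key
  have hsq : (‖v 1‖ ^ 2) ^ 2 ≤ ‖c v - β • v‖ ^ 2 := by
    linear_combination key + ‖v 1‖ ^ 2 * hnorm
  exact (pow_le_pow_iff_left₀ (by positivity) (norm_nonneg _) two_ne_zero).mp hsq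

end Annihilation

theorem occupation_probability_bound_general
    (c : EuclideanSpace ℂ (Fin 2) →ₗ[ℂ] EuclideanSpace ℂ (Fin 2))
    (hc0 : c (EuclideanSpace.single 0 1) = 0)
    (hc1 : c (EuclideanSpace.single 1 1) = EuclideanSpace.single 0 1)
    (v : EuclideanSpace ℂ (Fin 2)) (hv : ‖v‖ = 1)
    (ε : ℝ)
    (h : ∃ β : ℂ, ‖c v - β • v‖ ≤ ε) :
    ‖v 1‖ ^ 2 ≤ ε := by
  obtain ⟨β, hβ⟩ := h
  exact (sq_norm_apply_one_le_norm_sub_smul hc0 hc1 hv β).trans hβ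

/-- If a unit vector `v` is an ε-approximate eigenstate of the fermion
annihilation operator, then `ε` bounds the occupation probability `|v₁|²`
of the one-fermion state. -/
theorem occupation_probability_bound
    (c : EuclideanSpace ℂ (Fin 2) →ₗ[ℂ] EuclideanSpace ℂ (Fin 2))
    (hc0 : c (EuclideanSpace.single 0 1) = 0)
    (hc1 : c (EuclideanSpace.single 1 1) = EuclideanSpace.single 0 1)
    (v : EuclideanSpace ℂ (Fin 2)) (hv : ‖v‖ = 1)
    (ε : ℝ) (hε : 0 ≤ ε)
    (h : ∃ β : ℂ, ‖c v - β • v‖ ≤ ε) :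
    ‖v 1‖ ^ 2 ≤ ε :=
  occupation_probability_bound_general c hc0 hc1 v hv ε h
end

section
/- Let β₀, β₁, t, r ∈ ℂ with |β₀|² + |β₁|² = 1, β₀ ≠ 0, |t| ≤ 1 and |r| ≤ 1, and let ψ = !![β₀, r·β₁; t·β₁, 0] be the coefficient matrix of the coupler output state. Then there exist u, w : Fin 2 → ℂ such that the Euclidean distance satisfies √(Σ_{i,j} |ψ i j − u i * w j|²) ≤ |β₁|² / |β₀|; i.e., for small one-particle amplitude β₁ the output is approximately a product state. -/
/-! Pivoting on the nonzero entry `a = A 0 0` of a `2 × 2` matrix `A` gives a product matrix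
that agrees with `A` everywhere except in the corner `(1, 1)`, where the error is the Schur
complement `det A / a`. For the coupler output `det ψ = -r t β₁²`, so the error is at most
`|β₁|² / |β₀|`. -/

namespace Matrix

variable {𝕜 : Type*} [NormedField 𝕜]

theorem exists_sum_norm_sq_sub_mul_eq_norm_det_div (A : Matrix (Fin 2) (Fin 2) 𝕜)
    (h : A 0 0 ≠ 0) :
    ∃ u w : Fin 2 → 𝕜, ∑ i, ∑ j, ‖A i j - u i * w j‖ ^ 2 = (‖A.det‖ / ‖A 0 0‖) ^ 2 := by
  refine ⟨![A 0 0, A 1 0], ![1, A 0 1 / A 0 0], ?_⟩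
  have schur : A 1 1 - A 1 0 * (A 0 1 / A 0 0) = A.det / A 0 0 := by
    rw [det_fin_two]
    field_simp
  simp only [Fin.sum_univ_two, cons_val_zero, cons_val_one, mul_one, sub_self, norm_zero,
    mul_div_cancel₀ _ h, schur, norm_div]
  ring

end Matrix

theorem coupler_output_approx_product_state_general (β₀ β₁ t r : ℂ)
    (hβ₀ : β₀ ≠ 0) (ht : ‖t‖ ≤ 1) (hr : ‖r‖ ≤ 1)
    (ψ : Matrix (Fin 2) (Fin 2) ℂ)
    (hψ : ψ = !![β₀, r * β₁; t * β₁, 0]) :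
    ∃ u w : Fin 2 → ℂ,
      Real.sqrt (∑ i, ∑ j, ‖ψ i j - u i * w j‖ ^ 2)
        ≤ ‖β₁‖ ^ 2 / ‖β₀‖ := by
  have hψ₀₀ : ψ 0 0 = β₀ := by simp [hψ]
  have hdet : ‖ψ.det‖ = ‖t‖ * ‖r‖ * ‖β₁‖ ^ 2 := by
    simp only [hψ, Matrix.det_fin_two_of, mul_zero, zero_sub, norm_neg, norm_mul, sq]
    ring
  obtain ⟨u, w, hdist⟩ := ψ.exists_sum_norm_sq_sub_mul_eq_norm_det_div (hψ₀₀ ▸ hβ₀)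
  refine ⟨u, w, ?_⟩
  rw [hdist, Real.sqrt_sq (by positivity), hψ₀₀, hdet]
  have htr : ‖t‖ * ‖r‖ ≤ 1 := mul_le_one₀ ht (norm_nonneg r) hr
  gcongr
  exact mul_le_of_le_one_left (sq_nonneg _) htr

/-- For a normalized input state with `β₀ ≠ 0` and `|t|, |r| ≤ 1`, the coupler
output `ψ = !![β₀, r·β₁; t·β₁, 0]` is within ℓ²-distance `|β₁|²/|β₀|` of some
product state: for small `β₁` the output is approximately a product state. -/
theorem coupler_output_approx_product_state (β₀ β₁ t r : ℂ)
    (hnorm : ‖β₀‖ ^ 2 + ‖β₁‖ ^ 2 = 1)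
    (hβ₀ : β₀ ≠ 0) (ht : ‖t‖ ≤ 1) (hr : ‖r‖ ≤ 1)
    (ψ : Matrix (Fin 2) (Fin 2) ℂ)
    (hψ : ψ = !![β₀, r * β₁; t * β₁, 0]) :
    ∃ u w : Fin 2 → ℂ,
      Real.sqrt (∑ i, ∑ j, ‖ψ i j - u i * w j‖ ^ 2)
        ≤ ‖β₁‖ ^ 2 / ‖β₀‖ :=
  coupler_output_approx_product_state_general β₀ β₁ t r hβ₀ ht hr ψ hψ
end

section
/- (Proposition 3.) Let X be a type, n ≥ 2 a natural number, and f, g : X → ℂ. Define Γ : (Fin n → X) → (Fin n → X) → ℂ by Γ x y = (∏_{i} f (x i)) * (∏_{j} g (y j)). Suppose Γ x y = 0 whenever there exist indices i ≠ j with x i = x j. Then Γ x y = 0 for all x, y. That is, if a fermion correlator of order n > 1 factorizes, it is identically zero. -/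
/-- Proposition 3: if an order-`n` correlator (`n ≥ 2`) factorizes as
`Γ x y = ∏ f(xᵢ) * ∏ g(yⱼ)` and vanishes whenever two `x`-arguments coincide,
then it is identically zero. -/
theorem factorized_fermion_correlator_is_zero
    {X : Type*} (n : ℕ) (hn : 2 ≤ n) (f g : X → ℂ)
    (Γ : (Fin n → X) → (Fin n → X) → ℂ)
    (hΓ : ∀ x y, Γ x y = (∏ i, f (x i)) * ∏ j, g (y j))
    (hvanish : ∀ x y : Fin n → X, (∃ i j, i ≠ j ∧ x i = x j) → Γ x y = 0) :
    ∀ x y, Γ x y = 0 := by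
  intro x y
  rw [hΓ]
  by_cases hg : ∏ j, g (y j) = 0
  · rw [hg, mul_zero]
  · set i0 : Fin n := ⟨0, by omega⟩
    have h0 : Γ (fun _ => x i0) y = 0 := by
      apply hvanish
      exact ⟨⟨0, by omega⟩, ⟨1, by omega⟩, by simp [Fin.ext_iff], rfl⟩
    rw [hΓ] at h0
    have hf : f (x i0) = 0 := by
      rcases mul_eq_zero.mp h0 with h | h
      · simp only [Finset.prod_const, Finset.card_univ, Fintype.card_fin] at h
        exact pow_eq_zero_iff (by omega : n ≠ 0) |>.mp h
      · exact absurd h hg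
    rw [Finset.prod_eq_zero (Finset.mem_univ i0) hf, zero_mul]
end

section
/- (Proposition 4.) Let H be a complex inner product space and A, B : H →ₗ[ℂ] H linear operators satisfying A ∘ B = −(B ∘ A) and B ∘ B = 0. Let v ∈ H satisfy the perfect first-order coherence condition |⟪A v, B v⟫| = ‖A v‖ · ‖B v‖. Then A (B v) = 0 (and hence also B (A v) = 0). Consequently, any normally-ordered correlator in the state v containing the operator product A B vanishes. -/
/-! Equality in Cauchy–Schwarz makes `B v` a nonzero multiple of `A v` (or `B v = 0`), so `B (A v)`
is a multiple of `B (B v) = 0`; anticommutation turns this into `A (B v) = 0`. -/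

open scoped InnerProductSpace

theorem LinearMap.map_eq_zero_of_norm_inner_eq_norm_mul_norm {𝕜 E F : Type*} [RCLike 𝕜]
    [NormedAddCommGroup E] [InnerProductSpace 𝕜 E] [AddCommGroup F] [Module 𝕜 F]
    (T : E →ₗ[𝕜] F) {x y : E} (h : ‖⟪x, y⟫_𝕜‖ = ‖x‖ * ‖y‖) (hy : y ≠ 0) (hTy : T y = 0) :
    T x = 0 := by
  rcases eq_or_ne x 0 with rfl | hx
  · exact map_zero T
  obtain ⟨r, hr, rfl⟩ := (norm_inner_eq_norm_iff hx hy).mp h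
  rw [map_smul] at hTy
  exact (smul_eq_zero.mp hTy).resolve_left hr

open scoped ComplexInnerProductSpace in
/-- Proposition 4: if `A B = −B A`, `B² = 0` and the state `v` is perfectly
first-order coherent, `|⟪A v, B v⟫| = ‖A v‖·‖B v‖`, then `A (B v) = 0` and
`B (A v) = 0`; any correlator containing the product `A B` vanishes. -/
theorem perfect_coherence_kills_two_particle_amplitude
    {H : Type*} [NormedAddCommGroup H] [InnerProductSpace ℂ H]
    (A B : H →ₗ[ℂ] H) (hAB : A ∘ₗ B = -(B ∘ₗ A)) (hBB : B ∘ₗ B = 0)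
    (v : H) (h : ‖⟪A v, B v⟫‖ = ‖A v‖ * ‖B v‖) :
    A (B v) = 0 ∧ B (A v) = 0 := by
  have hanti : A (B v) = -B (A v) := by simpa using LinearMap.congr_fun hAB v
  suffices hBA : B (A v) = 0 by simp [hanti, hBA]
  rcases eq_or_ne (B v) 0 with hBv | hBv
  · simpa [hBv] using hanti
  · exact B.map_eq_zero_of_norm_inner_eq_norm_mul_norm h hBv
      (by simpa using LinearMap.congr_fun hBB v)
end

section
/- (Consequence of Propositions 4 and 5.) Let X be a type, ι a finite index type, H a complex inner product space, and T : ι → (H →ₗ[ℂ] H) with T i ∘ T j = −(T j ∘ T i) for all i, j. Let φ : ι → X → ℂ and define the field operators ψ x = Σ_i (φ i x) • T i. If v ∈ H satisfies perfect first-order coherence everywhere, i.e., |⟪ψ x v, ψ y v⟫| = ‖ψ x v‖ · ‖ψ y v‖ for all x, y ∈ X, then ψ x (ψ y v) = 0 for all x, y ∈ X: it is impossible to find a fermion at x and another fermion at y, so the state contains at most one particle. -/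
/-! Anticommutation is bilinear, so the field operators inherit it from the modes:
`ψ x ψ y = -ψ y ψ x`, and in particular `ψ x ψ x = 0`. Equality in Cauchy–Schwarz makes
`ψ y v` a multiple of `ψ x v` (or one of them vanishes), so `ψ x (ψ y v)` is a multiple of
`ψ x (ψ x v) = 0`, or vanishes by anticommutation. -/

open scoped InnerProductSpace

theorem sum_smul_mul_sum_smul_eq_neg_of_anticomm {R A ι κ : Type*} [CommSemiring R] [Ring A]
    [Algebra R A] {T : ι → A} {S : κ → A} (hTS : ∀ i j, T i * S j = -(S j * T i))
    (s : Finset ι) (t : Finset κ) (a : ι → R) (b : κ → R) :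
    (∑ i ∈ s, a i • T i) * (∑ j ∈ t, b j • S j) =
      -((∑ j ∈ t, b j • S j) * ∑ i ∈ s, a i • T i) := by
  simp only [Finset.sum_mul_sum, smul_mul_smul_comm, hTS, smul_neg, Finset.sum_neg_distrib]
  rw [Finset.sum_comm]
  simp only [mul_comm]

theorem apply_apply_eq_zero_of_norm_inner_eq_mul {𝕜 E : Type*} [RCLike 𝕜] [NormedAddCommGroup E]
    [InnerProductSpace 𝕜 E] {A B : Module.End 𝕜 E} (hAB : A * B = -(B * A)) (hA : A * A = 0)
    {v : E} (hv : ‖⟪A v, B v⟫_𝕜‖ = ‖A v‖ * ‖B v‖) : A (B v) = 0 := by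
  by_cases hAv : A v = 0
  · rw [← Module.End.mul_apply, hAB, LinearMap.neg_apply, Module.End.mul_apply, hAv, map_zero,
      neg_zero]
  by_cases hBv : B v = 0
  · rw [hBv, map_zero]
  obtain ⟨r, -, hr⟩ := (norm_inner_eq_norm_iff hAv hBv).mp hv
  rw [hr, map_smul, ← Module.End.mul_apply, hA, LinearMap.zero_apply, smul_zero]

open scoped ComplexInnerProductSpace in
/-- Propositions 4 & 5: if a state `v` of a fermion field
`ψ x = ∑ i, φ i x • T i` (with pairwise anticommuting mode operators `T i`)
has perfect first-order coherence everywhere, then `ψ x (ψ y v) = 0` for all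
`x, y`: the state contains at most one particle. -/
theorem perfect_first_order_coherence_at_most_one_fermion
    {X : Type*} {ι : Type*} [Fintype ι]
    {H : Type*} [NormedAddCommGroup H] [InnerProductSpace ℂ H]
    (T : ι → (H →ₗ[ℂ] H)) (hT : ∀ i j, T i ∘ₗ T j = -(T j ∘ₗ T i))
    (φ : ι → X → ℂ)
    (ψ : X → (H →ₗ[ℂ] H)) (hψ : ∀ x, ψ x = ∑ i, φ i x • T i)
    (v : H)
    (hcoh : ∀ x y : X, ‖⟪ψ x v, ψ y v⟫‖ = ‖ψ x v‖ * ‖ψ y v‖) :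
    ∀ x y : X, ψ x (ψ y v) = 0 := by
  have hanti : ∀ x y, ψ x * ψ y = -(ψ y * ψ x) := fun x y => by
    rw [hψ, hψ]
    exact sum_smul_mul_sum_smul_eq_neg_of_anticomm hT _ _ _ _
  have := IsAddTorsionFree.of_isTorsionFree ℂ (Module.End ℂ H)
  intro x y
  exact apply_apply_eq_zero_of_norm_inner_eq_mul (hanti x y) (self_eq_neg.mp (hanti x x))
    (hcoh x y)
end
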